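/- In the symmetric group Sym(4) on four letters {1,2,3,4}, let S = {(1 2 3), (1 3 2), (1 2)(3 4), (1 3), (1 4), (1 2 3 4), (1 4 3 2)} (a set of 7 permutations, written in cycle notation). Then S is inverse-closed, does not contain the identity, and the Cayley graph Cay(Sym(4), S) is distance-regular with intersection array {7,4,1; 1,2,7}. (Since the Klein graph is the unique distance-regular graph with this intersection array, on 24 vertices, this says the Klein graph is a Cayley graph over Sym(4).) -/

import Mathlib

/-- The Cayley graph of a group `G` with connection set `S`. When `S` is inverse-closed
and does not contain `1`, distinct `a b` are adjacent iff `a * b⁻¹ ∈ S`. -/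
def cayleyGraph {G : Type*} [Group G] (S : Set G) : SimpleGraph G where
  Adj a b := a ≠ b ∧ a * b⁻¹ ∈ S ∧ b * a⁻¹ ∈ S
  symm := ⟨fun a b h => ⟨h.1.symm, h.2.2, h.2.1⟩⟩
  loopless := ⟨fun a h => h.1 rfl⟩

/-- `Γ.IsDRGWith b c` means that `Γ` is a distance-regular graph with intersection array
`{b₀, …, b_{d-1}; c₁, …, c_d}`, where `d` is the diameter of `Γ`. -/
def SimpleGraph.IsDRGWith {V : Type*} (Γ : SimpleGraph V) (b c : List ℕ) : Prop :=
  Γ.Connected ∧ c.length = b.length ∧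
  (∀ x y : V, Γ.dist x y ≤ b.length) ∧
  (∃ x y : V, Γ.dist x y = b.length) ∧
  ∀ (i : ℕ) (x y : V), Γ.dist x y = i →
    (i < b.length → {z : V | Γ.Adj y z ∧ Γ.dist x z = i + 1}.ncard = b.getD i 0) ∧
    (1 ≤ i → {z : V | Γ.Adj y z ∧ Γ.dist x z = i - 1}.ncard = c.getD (i - 1) 0)

/-- The connection set for the Klein graph inside `Sym(4)` (acting on `{0,1,2,3}` instead of
`{1,2,3,4}`): the permutations `(1 2 3), (1 3 2), (1 2)(3 4), (1 3), (1 4), (1 2 3 4),`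
and `(1 4 3 2)`. -/
def kleinConnectionSet : Set (Equiv.Perm (Fin 4)) :=
  {c[(0 : Fin 4), 1, 2], c[(0 : Fin 4), 2, 1], c[(0 : Fin 4), 1] * c[(2 : Fin 4), 3],
    c[(0 : Fin 4), 2], c[(0 : Fin 4), 3], c[(0 : Fin 4), 1, 2, 3], c[(0 : Fin 4), 3, 2, 1]}

/-! Right multiplication is an automorphism of a Cayley graph, so `dist x y` is the word length
`ℓ (y * x⁻¹)` with respect to `S`, and the neighbours of `y` are the `s * y` with `s ∈ S`.
Hence the intersection numbers at `(x, y)` only depend on `g = y * x⁻¹`: they count the `s ∈ S`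
with `ℓ (s * g) = ℓ g ± 1`. For the Klein set, `ℓ` is `0, 1, 2, 3` on `{1}`, `S`,
`S² \ (S ∪ {1})` and the rest, and the counts are a finite check over the 24 elements of `Sym(4)`.
-/

namespace SimpleGraph

variable {V : Type*} (Γ : SimpleGraph V) {o : V} {f : V → ℕ}

lemma exists_walk_length_eq_of_exists_adj_succ_eq (ho : f o = 0)
    (hdesc : ∀ v, v ≠ o → ∃ w, Γ.Adj v w ∧ f w + 1 = f v) (v : V) :
    ∃ p : Γ.Walk v o, p.length = f v := by
  induction h : f v generalizing v with
  | zero =>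
    obtain rfl : v = o := by
      by_contra hne
      obtain ⟨w, -, hw⟩ := hdesc v hne
      omega
    exact ⟨.nil, rfl⟩
  | succ n ih =>
    obtain ⟨w, hadj, hw⟩ := hdesc v (by rintro rfl; omega)
    obtain ⟨p, hp⟩ := ih w (by omega)
    exact ⟨.cons hadj p, by simp [hp]⟩

lemma le_length_of_forall_adj_le_succ (ho : f o = 0)
    (hlip : ∀ v w, Γ.Adj v w → f v ≤ f w + 1) {v : V} (p : Γ.Walk v o) : f v ≤ p.length := by
  induction p with
  | nil => simp [ho]
  | cons hadj p ih => simpa using (hlip _ _ hadj).trans (Nat.succ_le_succ (ih ho))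

lemma dist_eq_of_exists_adj_succ_eq (ho : f o = 0)
    (hdesc : ∀ v, v ≠ o → ∃ w, Γ.Adj v w ∧ f w + 1 = f v)
    (hlip : ∀ v w, Γ.Adj v w → f v ≤ f w + 1) (v : V) : Γ.dist o v = f v := by
  obtain ⟨p, hp⟩ := Γ.exists_walk_length_eq_of_exists_adj_succ_eq ho hdesc v
  obtain ⟨q, hq⟩ := p.reverse.reachable.exists_walk_length_eq_dist
  refine le_antisymm (by simpa [hp] using Γ.dist_le p.reverse) ?_
  simpa [hq] using Γ.le_length_of_forall_adj_le_succ ho hlip q.reverse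

end SimpleGraph

section Cayley

variable {G : Type*} [Group G] {S : Set G}

def IsWordLength (S : Set G) (ℓ : G → ℕ) : Prop :=
  ℓ 1 = 0 ∧ (∀ g, g ≠ 1 → ∃ s ∈ S, ℓ (s * g) + 1 = ℓ g) ∧ ∀ g, ∀ s ∈ S, ℓ g ≤ ℓ (s * g) + 1

lemma cayleyGraph_adj_iff (hS : ∀ s ∈ S, s⁻¹ ∈ S) (h1 : (1 : G) ∉ S) {a b : G} :
    (cayleyGraph S).Adj a b ↔ b * a⁻¹ ∈ S := by
  refine ⟨fun h => h.2.2, fun h => ⟨?_, by simpa using hS _ h, h⟩⟩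
  rintro rfl
  exact h1 (by simpa using h)

variable {ℓ : G → ℕ}

lemma cayleyGraph_dist_eq (hS : ∀ s ∈ S, s⁻¹ ∈ S) (h1 : (1 : G) ∉ S) (hℓ : IsWordLength S ℓ)
    (x y : G) : (cayleyGraph S).dist x y = ℓ (y * x⁻¹) := by
  obtain ⟨hone, hdesc, hlip⟩ := hℓ
  refine (cayleyGraph S).dist_eq_of_exists_adj_succ_eq (f := fun v => ℓ (v * x⁻¹)) (by simpa)
    (fun v hv => ?_) (fun v w hvw => ?_) y
  · obtain ⟨s, hs, hsv⟩ := hdesc (v * x⁻¹) (by rwa [Ne, mul_inv_eq_one])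
    exact ⟨s * v, by simpa [cayleyGraph_adj_iff hS h1], by simpa [mul_assoc] using hsv⟩
  · rw [cayleyGraph_adj_iff hS h1] at hvw
    simpa [mul_assoc] using hlip (v * x⁻¹) _ hvw

lemma cayleyGraph_connected (hS : ∀ s ∈ S, s⁻¹ ∈ S) (h1 : (1 : G) ∉ S) (hℓ : IsWordLength S ℓ) :
    (cayleyGraph S).Connected := by
  refine .mk fun x y => ?_
  obtain rfl | hne := eq_or_ne x y
  · rfl
  refine .of_dist_ne_zero ?_
  obtain ⟨s, -, hs⟩ := hℓ.2.1 (y * x⁻¹) (by rwa [Ne, mul_inv_eq_one, eq_comm])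
  rw [cayleyGraph_dist_eq hS h1 hℓ]
  omega

lemma ncard_setOf_cayleyGraph_adj_and (hS : ∀ s ∈ S, s⁻¹ ∈ S) (h1 : (1 : G) ∉ S) (y : G)
    (P : G → Prop) : {z | (cayleyGraph S).Adj y z ∧ P z}.ncard = {s | s ∈ S ∧ P (s * y)}.ncard := by
  have himage : {z | (cayleyGraph S).Adj y z ∧ P z} = (· * y) '' {s | s ∈ S ∧ P (s * y)} := by
    ext z
    simp only [cayleyGraph_adj_iff hS h1, Set.mem_ofPred_eq, Set.mem_image]
    exact ⟨fun h => ⟨z * y⁻¹, by simpa using h⟩, by rintro ⟨s, hs, rfl⟩; simpa using hs⟩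
  rw [himage, Set.ncard_image_of_injective _ (mul_left_injective y)]

lemma cayleyGraph_isDRGWith (hS : ∀ s ∈ S, s⁻¹ ∈ S) (h1 : (1 : G) ∉ S) (hℓ : IsWordLength S ℓ)
    {b c : List ℕ} (hlen : c.length = b.length) (hle : ∀ g, ℓ g ≤ b.length)
    (hdiam : ∃ g, ℓ g = b.length)
    (hb : ∀ g, ℓ g < b.length → {s | s ∈ S ∧ ℓ (s * g) = ℓ g + 1}.ncard = b.getD (ℓ g) 0)
    (hc : ∀ g, 1 ≤ ℓ g → {s | s ∈ S ∧ ℓ (s * g) = ℓ g - 1}.ncard = c.getD (ℓ g - 1) 0) :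
    (cayleyGraph S).IsDRGWith b c := by
  have hdist := cayleyGraph_dist_eq hS h1 hℓ
  refine ⟨cayleyGraph_connected hS h1 hℓ, hlen, fun x y => hdist x y ▸ hle _, ?_, ?_⟩
  · obtain ⟨g, hg⟩ := hdiam
    exact ⟨1, g, by simpa [hdist] using hg⟩
  · rintro i x y hxy
    rw [hdist] at hxy
    subst hxy
    simp only [hdist, ncard_setOf_cayleyGraph_adj_and hS h1, mul_assoc]
    exact ⟨hb _, hc _⟩

end Cayley

instance : DecidablePred (· ∈ kleinConnectionSet) := fun g => by
  unfold kleinConnectionSet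
  infer_instance

def kleinLevel (g : Equiv.Perm (Fin 4)) : ℕ :=
  if g = 1 then 0 else if g ∈ kleinConnectionSet then 1
  else if ∃ s ∈ kleinConnectionSet, s * g ∈ kleinConnectionSet then 2 else 3

lemma inv_mem_kleinConnectionSet : ∀ s ∈ kleinConnectionSet, s⁻¹ ∈ kleinConnectionSet := by
  decide +kernel

lemma one_notMem_kleinConnectionSet : (1 : Equiv.Perm (Fin 4)) ∉ kleinConnectionSet := by
  decide +kernel

lemma isWordLength_kleinLevel : IsWordLength kleinConnectionSet kleinLevel :=
  ⟨rfl, by decide +kernel, by decide +kernel⟩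

lemma card_kleinLevel_succ : ∀ g, kleinLevel g < 3 →
    (Finset.univ.filter fun s => s ∈ kleinConnectionSet ∧
      kleinLevel (s * g) = kleinLevel g + 1).card = [7, 4, 1].getD (kleinLevel g) 0 := by
  decide +kernel

lemma card_kleinLevel_pred : ∀ g, 1 ≤ kleinLevel g →
    (Finset.univ.filter fun s => s ∈ kleinConnectionSet ∧
      kleinLevel (s * g) = kleinLevel g - 1).card = [1, 2, 7].getD (kleinLevel g - 1) 0 := by
  decide +kernel

/-- The Klein graph is a Cayley graph over `Sym(4)`: the above `7`-element set `S` is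
inverse-closed, does not contain the identity, and `Cay(Sym(4), S)` is distance-regular with
intersection array `{7,4,1; 1,2,7}`. -/
theorem stmt_19 :
    (∀ s ∈ kleinConnectionSet, s⁻¹ ∈ kleinConnectionSet) ∧
    (1 : Equiv.Perm (Fin 4)) ∉ kleinConnectionSet ∧
    (cayleyGraph kleinConnectionSet).IsDRGWith [7, 4, 1] [1, 2, 7] := by
  refine ⟨inv_mem_kleinConnectionSet, one_notMem_kleinConnectionSet,
    cayleyGraph_isDRGWith inv_mem_kleinConnectionSet one_notMem_kleinConnectionSet
      isWordLength_kleinLevel rfl (by decide +kernel) (by decide +kernel) ?_ ?_⟩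
  · intro g hg
    rw [Set.ncard_eq_toFinset_card', Set.toFinset_ofPred]
    exact card_kleinLevel_succ g hg
  · intro g hg
    rw [Set.ncard_eq_toFinset_card', Set.toFinset_ofPred]
    exact card_kleinLevel_pred g hg
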